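/- Assume 2rlη = r' with r, r' ∈ ℤ, r > 0. Let u, v ∈ ℂ, write G := θ^{(2l)}_{00}, suppose G((v−u)/2+2mlη) ≠ 0 for all m ∈ ℤ, and let t : ℤ → ℂ satisfy t_{m+2}·G((v−u)/2+2mlη) = t_m·G((u−v)/2+2mlη) for all m ∈ ℤ. Define y_{j,i} := t_{j+i}·t_{−j+i+1} for j, i ∈ ℤ. Consider a j-transition (j'' → j''') of one of the four types: j''' = j''+1, j''' = j''−1, j''' = j'' = 1, or j''' = j'' = r, and likewise an i-transition (i'' → i'''). Then y_{j''',i'''}·G((v−u)/2 + 2wlη) = y_{j'',i''}·G((u−v)/2 + 2wlη), where w is given as follows: w = i''+j'' if (i'''=i''+1, j'''=j''+1); w = i''−j''+1 if (i''+1, j''−1); w = i'' if (i''+1, j'''=j''=1); w = i''+r if (i''+1, j'''=j''=r); w = −i''+j''+1 if (i''−1, j''+1); w = −i''−j''+2 if (i''−1, j''−1); w = −i''+1 if (i''−1, j'''=j''=1); w = −i''+r+1 if (i''−1, j'''=j''=r); w = j'' if (i'''=i''=1, j''+1); w = −j''+1 if (i'''=i''=1, j''−1); w = 0 if (i'''=i''=1,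 j'''=j''=1); w = r if (i'''=i''=1, j'''=j''=r); w = j''+r if (i'''=i''=r, j''+1); w = −j''+r+1 if (i'''=i''=r, j''−1); w = r if (i'''=i''=r, j'''=j''=1); w = 2r if (i'''=i''=r, j'''=j''=r). -/

import Mathlib

noncomputable section

open Complex

/-- Theta function with characteristics `θ_{ab}(z,τ)`. -/
def theta (a b : ℝ) (z τ : ℂ) : ℂ :=
  ∑' n : ℤ, Complex.exp ((Real.pi : ℂ) * Complex.I * ((a : ℂ)/2 + (n : ℂ))^2 * τ +
    2 * (Real.pi : ℂ) * Complex.I * ((a : ℂ)/2 + (n : ℂ)) * ((b : ℂ)/2 + z))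

/-- `[z;a]_k := ∏_{j=0}^{k-1} θ₁₁(z+a+2jη,τ) θ₁₁(-z+a+2jη,τ)`. -/
def brK (η τ z a : ℂ) (k : ℕ) : ℂ :=
  ∏ j ∈ Finset.range k,
    theta 1 1 (z + a + 2*(j:ℂ)*η) τ * theta 1 1 (-z + a + 2*(j:ℂ)*η) τ

/-- `f_ε(λ,u,z) := [z;(ελ+u)/2+(-l+1)η]_{2l}`, with `tl = 2l`. -/
def fEps (η τ l : ℂ) (tl : ℕ) (ε lam u z : ℂ) : ℂ :=
  brK η τ z ((ε*lam + u)/2 + (-l+1)*η) tl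

/-- `ω_λ(u;v)(z) := [z;(λ+u-v)/2+(-l+1)η]_{2l}`. -/
def omegaFn (η τ l : ℂ) (tl : ℕ) (lam u v z : ℂ) : ℂ :=
  brK η τ z ((lam + u - v)/2 + (-l+1)*η) tl

def s0f (η τ z : ℂ) : ℂ := theta 1 1 η τ * theta 1 1 (2*z) τ
def s1f (η τ z : ℂ) : ℂ := theta 1 0 η τ * theta 1 0 (2*z) τ
def s2f (η τ z : ℂ) : ℂ := Complex.I * theta 0 0 η τ * theta 0 0 (2*z) τ
def s3f (η τ z : ℂ) : ℂ := theta 0 1 η τ * theta 0 1 (2*z) τ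

/-- The difference operator `ρ^l(S^a)` associated to the coefficient function `s`. -/
def rhoS (η τ l : ℂ) (s : ℂ → ℂ) : (ℂ → ℂ) →ₗ[ℂ] (ℂ → ℂ) where
  toFun f := fun z =>
    (s (z - l*η) * f (z + η) - s (-z - l*η) * f (z - η)) / theta 1 1 (2*z) τ
  map_add' f g := by
    funext z
    simp only [Pi.add_apply]
    ring
  map_smul' c f := by
    funext z
    simp only [Pi.smul_apply, smul_eq_mul, RingHom.id_apply]
    ring

def W0 (η τ u : ℂ) : ℂ := theta 1 1 u τ / theta 1 1 η τ
def W1 (η τ u : ℂ) : ℂ := theta 1 0 u τ / theta 1 0 η τ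
def W2 (η τ u : ℂ) : ℂ := theta 0 0 u τ / theta 0 0 η τ
def W3 (η τ u : ℂ) : ℂ := theta 0 1 u τ / theta 0 1 η τ

/-- `θ^{(2l)}_{00}(u) := ∏_{j=0}^{2l-1} θ₀₀(u+(2j-2l+1)η,τ)`, with `tl = 2l`. -/
def theta2l (η τ : ℂ) (tl : ℕ) (u : ℂ) : ℂ :=
  ∏ j ∈ Finset.range tl, theta 0 0 (u + (2*(j:ℂ) - (tl:ℂ) + 1)*η) τ

/-- The gauge transformation matrix `M_λ(v)`. -/
def Mlam (τ lam v : ℂ) : Matrix (Fin 2) (Fin 2) ℂ :=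
  !![-theta 0 0 ((lam - v)/2) (τ/2), -theta 0 0 ((lam + v)/2) (τ/2);
     theta 0 1 ((lam - v)/2) (τ/2), theta 0 1 ((lam + v)/2) (τ/2)]

/-- The `L`-operator as a 2×2 matrix of difference operators. -/
def LopM (η τ l u : ℂ) : Matrix (Fin 2) (Fin 2) (Module.End ℂ (ℂ → ℂ)) :=
  !![W0 η τ u • rhoS η τ l (s0f η τ) + W3 η τ u • rhoS η τ l (s3f η τ),
     W1 η τ u • rhoS η τ l (s1f η τ) - (Complex.I * W2 η τ u) • rhoS η τ l (s2f η τ);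
     W1 η τ u • rhoS η τ l (s1f η τ) + (Complex.I * W2 η τ u) • rhoS η τ l (s2f η τ),
     W0 η τ u • rhoS η τ l (s0f η τ) - W3 η τ u • rhoS η τ l (s3f η τ)]

/-- `N := adj(M_{λ₀+4(j+ε)lη}(v)) · L(u) · M_{λ₀+4jlη}(v)`. -/
def NMat (η τ l lam0 v u : ℂ) (j : ℤ) (ε : ℂ) :
    Matrix (Fin 2) (Fin 2) (Module.End ℂ (ℂ → ℂ)) :=
  ((Mlam τ (lam0 + 4*((j:ℂ)+ε)*l*η) v).adjugate).map
      (algebraMap ℂ (Module.End ℂ (ℂ → ℂ))) *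
    LopM η τ l u *
    (Mlam τ (lam0 + 4*(j:ℂ)*l*η) v).map (algebraMap ℂ (Module.End ℂ (ℂ → ℂ)))

/-- The kernel `μ(z,w)` of the Sklyanin form. -/
def muK (η τ : ℂ) (tl : ℕ) (z w : ℂ) : ℂ :=
  theta 1 1 (2*z) τ * theta 1 1 (2*w) τ /
    ∏ j ∈ Finset.range (tl + 2),
      (theta 0 0 (z + w + (2*(j:ℂ) - (tl:ℂ) - 1)*η) τ *
       theta 0 0 (z - w + (2*(j:ℂ) - (tl:ℂ) - 1)*η) τ)

/-- Integrand of the Sklyanin form. -/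
def sklIntegrand (η τ : ℂ) (tl : ℕ) (f g : ℂ → ℂ) (x y : ℝ) : ℂ :=
  (starRingEnd ℂ) (f ((x:ℂ) + (y:ℂ)*Complex.I)) * g ((x:ℂ) + (y:ℂ)*Complex.I) *
    muK η τ tl ((x:ℂ) + (y:ℂ)*Complex.I) ((x:ℂ) - (y:ℂ)*Complex.I)

/-- The Sklyanin form `⟨f,g⟩` (with `τ = i t₀`). -/
def sklForm (η τ : ℂ) (tl : ℕ) (t0 : ℝ) (f g : ℂ → ℂ) : ℂ :=
  ∫ x in (0:ℝ)..1, ∫ y in (0:ℝ)..t0, sklIntegrand η τ tl f g x y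

/-- The constant `C_{2l}`. -/
def C2l (η τ : ℂ) (tl : ℕ) : ℂ :=
  (-2*η * Complex.exp (3*(Real.pi:ℂ)*Complex.I*τ/4)) /
    (theta 1 1 (2*((tl:ℂ)+1)*η) τ *
      ∏' j : ℕ, (1 - Complex.exp (2*(Real.pi:ℂ)*Complex.I*((j:ℂ)+1)*τ))^3)
/-- `y_{j,i} := t_{j+i} t_{-j+i+1}`. -/
def yT (t : ℤ → ℂ) (j i : ℤ) : ℂ := t (j+i) * t (-j+i+1)

/-!
Put `g m := G((v-u)/2 + 2mlη)`. Since `θ₀₀` is even and `1`-periodic, `G((u-v)/2 + 2mlη) = g (-m)`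
and, because `2rlη ∈ ℤ`, `g` is `r`-periodic; the hypothesis is the recurrence
`t (m+2) g m = t m g (-m)`. Comparing the products of the recurrence along a full period makes `t`
`2r`-periodic, and induction on `j` gives `t j t (1-j) = t (j+1) t (2-j)`. Hence
`y_{0,i} = y_{1,i}`, `y_{r+1,i} = y_{r,i}`, `y_{j,0} = y_{j,1}` and `y_{j,r+1} = y_{j,r}`, so every
transition that keeps `j` or `i` fixed at `1` or `r` is a `±1` transition in disguise, and each
`±1` transition is a single instance of the recurrence.
-/

open Finset Function

section RangeProd

variable {M : Type*} [CommMonoid M]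

theorem Finset.prod_range_comp_add_one_of_eq {f : ℕ → M} {n : ℕ} (hf : f n = f 0) :
    ∏ s ∈ range n, f (s + 1) = ∏ s ∈ range n, f s := by
  cases n with
  | zero => simp
  | succ n => rw [prod_range_succ, hf, ← prod_range_succ']

theorem Function.Periodic.prod_range_add {φ : ℤ → M} {n : ℕ} (hφ : Periodic φ n) (k : ℤ) :
    ∏ s ∈ range n, φ (k + s) = ∏ s ∈ range n, φ s := by
  have step : ∀ k : ℤ, ∏ s ∈ range n, φ (k + 1 + s) = ∏ s ∈ range n, φ (k + s) := fun k => by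
    simpa only [Nat.cast_add, Nat.cast_one, Nat.cast_zero, add_zero, add_assoc, add_comm (1 : ℤ)]
      using prod_range_comp_add_one_of_eq (f := fun s : ℕ => φ (k + s)) (by simpa using hφ k)
  induction k using Int.induction_on with
  | zero => simp
  | succ k ih => rw [step, ih]
  | pred k ih => rw [← ih, ← step, sub_add_cancel]

theorem Function.Periodic.prod_range_neg {φ : ℤ → M} {n : ℕ} (hφ : Periodic φ n) :
    ∏ s ∈ range n, φ (-s) = ∏ s ∈ range n, φ s := by
  rw [← prod_range_reflect, ← hφ.prod_range_add (1 - n)]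
  refine prod_congr rfl fun s hs => ?_
  rw [Nat.sub_sub, Nat.cast_sub (by simpa [Nat.add_comm] using mem_range.1 hs)]
  push_cast
  ring_nf

theorem mul_prod_range_of_recurrence {g h t : ℤ → M} (ht : ∀ m, t (m + 2) * g m = t m * h m)
    (a : ℤ) (n : ℕ) :
    t (a + 2 * n) * ∏ s ∈ range n, g (a + 2 * s) = t a * ∏ s ∈ range n, h (a + 2 * s) := by
  induction n with
  | zero => simp
  | succ n ih =>
    have e : a + 2 * ((n + 1 : ℕ) : ℤ) = a + 2 * n + 2 := by push_cast; ring
    rw [prod_range_succ, prod_range_succ, e, ← mul_assoc, mul_right_comm, ht, mul_right_comm, ih,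
      mul_assoc]

end RangeProd

section Recurrence

variable {R : Type*} [CommRing R] [IsDomain R] {g t : ℤ → R}

theorem periodic_of_recurrence {n : ℕ} (hg : ∀ m, g m ≠ 0) (hper : Periodic g n)
    (ht : ∀ m, t (m + 2) * g m = t m * g (-m)) : Periodic t (2 * n) := by
  have hspaced : ∀ b : ℤ, Periodic (fun s : ℤ => g (b + 2 * s)) n := fun b s => by
    simpa only [Nat.cast_ofNat, mul_add, ← add_assoc] using hper.nat_mul 2 (b + 2 * s)
  intro a
  have hprod : ∏ s ∈ range n, g (-(a + 2 * s)) = ∏ s ∈ range n, g (a + 2 * s) := by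
    calc ∏ s ∈ range n, g (-(a + 2 * s)) = ∏ s ∈ range n, g (-a + 2 * (-s : ℤ)) := by
          simp only [neg_add, mul_neg]
      _ = ∏ s ∈ range n, g (a + 2 * (-a + s)) := by
          rw [(hspaced (-a)).prod_range_neg]
          exact prod_congr rfl fun s _ => by ring_nf
      _ = ∏ s ∈ range n, g (a + 2 * s) := (hspaced a).prod_range_add (-a)
  have hchain := mul_prod_range_of_recurrence ht a n
  rw [hprod] at hchain
  exact mul_right_cancel₀ (prod_ne_zero_iff.2 fun s _ => hg _) hchain

theorem mul_one_sub_eq_of_recurrence (hg : ∀ m, g m ≠ 0)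
    (ht : ∀ m, t (m + 2) * g m = t m * g (-m)) (j : ℤ) :
    t j * t (1 - j) = t (j + 1) * t (2 - j) := by
  have hnat : ∀ k : ℕ, t k * t (1 - k) = t (k + 1) * t (2 - k) := by
    intro k
    induction k with
    | zero =>
      have h2 : t 2 = t 0 := mul_right_cancel₀ (hg 0) (by simpa using ht 0)
      simp [h2, mul_comm]
    | succ k ih =>
      apply mul_right_cancel₀ (hg k)
      push_cast
      linear_combination (norm := ring_nf) -t (k + 1) * ht (-k) - g (-k) * ih - t (1 - k) * ht k
  obtain ⟨k, rfl | rfl⟩ := Int.eq_nat_or_neg j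
  · exact hnat k
  · have h := hnat (k + 1)
    push_cast at h
    linear_combination (norm := ring_nf) h

end Recurrence

theorem theta_zero_zero_neg (z τ : ℂ) : theta 0 0 (-z) τ = theta 0 0 z τ := by
  unfold theta
  rw [← (Equiv.neg ℤ).tsum_eq]
  refine tsum_congr fun n => ?_
  simp only [Equiv.neg_apply, Int.cast_neg, Complex.ofReal_zero, zero_div, zero_add]
  ring_nf

theorem theta_zero_zero_add_intCast (z τ : ℂ) (k : ℤ) : theta 0 0 (z + k) τ = theta 0 0 z τ := by
  unfold theta
  refine tsum_congr fun n => ?_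
  conv_rhs => rw [← mul_one (Complex.exp _), ← Complex.exp_int_mul_two_pi_mul_I (n * k),
    ← Complex.exp_add]
  push_cast
  ring_nf

theorem theta2l_add_intCast (η τ : ℂ) (tl : ℕ) (x : ℂ) (k : ℤ) :
    theta2l η τ tl (x + k) = theta2l η τ tl x := by
  unfold theta2l
  refine prod_congr rfl fun j _ => ?_
  rw [add_right_comm, theta_zero_zero_add_intCast]

theorem theta2l_neg (η τ : ℂ) (tl : ℕ) (x : ℂ) : theta2l η τ tl (-x) = theta2l η τ tl x := by
  unfold theta2l
  rw [← prod_range_reflect]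
  refine prod_congr rfl fun j hj => ?_
  rw [Nat.sub_sub, Nat.cast_sub (by simpa [Nat.add_comm] using mem_range.1 hj),
    ← theta_zero_zero_neg]
  push_cast
  ring_nf

section Transitions

variable {g t : ℤ → ℂ}

theorem yT_add_one_add_one (ht : ∀ m, t (m + 2) * g m = t m * g (-m)) (j i : ℤ) :
    yT t (j + 1) (i + 1) * g (i + j) = yT t j i * g (-(i + j)) := by
  unfold yT
  linear_combination (norm := ring_nf) t (-j + i + 1) * ht (i + j)

theorem yT_sub_one_add_one (ht : ∀ m, t (m + 2) * g m = t m * g (-m)) (j i : ℤ) :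
    yT t (j - 1) (i + 1) * g (i - j + 1) = yT t j i * g (-(i - j + 1)) := by
  unfold yT
  linear_combination (norm := ring_nf) t (j + i) * ht (i - j + 1)

theorem yT_add_one_sub_one (ht : ∀ m, t (m + 2) * g m = t m * g (-m)) (j i : ℤ) :
    yT t (j + 1) (i - 1) * g (-i + j + 1) = yT t j i * g (-(-i + j + 1)) := by
  unfold yT
  linear_combination (norm := ring_nf) -t (j + i) * ht (i - j - 1)

theorem yT_sub_one_sub_one (ht : ∀ m, t (m + 2) * g m = t m * g (-m)) (j i : ℤ) :
    yT t (j - 1) (i - 1) * g (-i - j + 2) = yT t j i * g (-(-i - j + 2)) := by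
  unfold yT
  linear_combination (norm := ring_nf) -t (-j + i + 1) * ht (i + j - 2)

theorem yT_zero_left (t : ℤ → ℂ) (i : ℤ) : yT t 0 i = yT t 1 i := by
  unfold yT
  ring_nf

theorem yT_natCast_add_one_left {r : ℕ} (hP : Periodic t (2 * r)) (i : ℤ) :
    yT t (r + 1) i = yT t r i := by
  unfold yT
  linear_combination (norm := ring_nf) t (r + i) * hP (-r + i + 1) - t (r + 1 + i) * hP (-r + i)

theorem yT_zero_right (hg : ∀ m, g m ≠ 0) (ht : ∀ m, t (m + 2) * g m = t m * g (-m)) (j : ℤ) :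
    yT t j 0 = yT t j 1 := by
  unfold yT
  linear_combination (norm := ring_nf) mul_one_sub_eq_of_recurrence hg ht j

theorem yT_natCast_add_one_right {r : ℕ} (hg : ∀ m, g m ≠ 0)
    (ht : ∀ m, t (m + 2) * g m = t m * g (-m)) (hP : Periodic t (2 * r)) (j : ℤ) :
    yT t j (r + 1) = yT t j r := by
  unfold yT
  linear_combination (norm := ring_nf) -mul_one_sub_eq_of_recurrence hg ht (j + r)
    + t (j + r + 1) * hP (2 - j - r) - t (j + r) * hP (1 - j - r)

end Transitions

theorem yT_transitions {g h t : ℤ → ℂ} {r : ℕ} (hg : ∀ m, g m ≠ 0) (hh : ∀ m, h m = g (-m))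
    (hper : Periodic g r) (ht : ∀ m, t (m + 2) * g m = t m * h m) :
    (∀ j i : ℤ, yT t (j+1) (i+1) * g (i+j) = yT t j i * h (i+j)) ∧
    (∀ j i : ℤ, yT t (j-1) (i+1) * g (i-j+1) = yT t j i * h (i-j+1)) ∧
    (∀ i : ℤ, yT t 1 (i+1) * g i = yT t 1 i * h i) ∧
    (∀ i : ℤ, yT t r (i+1) * g (i+r) = yT t r i * h (i+r)) ∧
    (∀ j i : ℤ, yT t (j+1) (i-1) * g (-i+j+1) = yT t j i * h (-i+j+1)) ∧
    (∀ j i : ℤ, yT t (j-1) (i-1) * g (-i-j+2) = yT t j i * h (-i-j+2)) ∧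
    (∀ i : ℤ, yT t 1 (i-1) * g (-i+1) = yT t 1 i * h (-i+1)) ∧
    (∀ i : ℤ, yT t r (i-1) * g (-i+r+1) = yT t r i * h (-i+r+1)) ∧
    (∀ j : ℤ, yT t (j+1) 1 * g j = yT t j 1 * h j) ∧
    (∀ j : ℤ, yT t (j-1) 1 * g (-j+1) = yT t j 1 * h (-j+1)) ∧
    (yT t 1 1 * g 0 = yT t 1 1 * h 0) ∧
    (yT t r 1 * g r = yT t r 1 * h r) ∧
    (∀ j : ℤ, yT t (j+1) r * g (j+r) = yT t j r * h (j+r)) ∧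
    (∀ j : ℤ, yT t (j-1) r * g (-j+r+1) = yT t j r * h (-j+r+1)) ∧
    (yT t 1 r * g r = yT t 1 r * h r) ∧
    (yT t r r * g (2*r) = yT t r r * h (2*r)) := by
  simp only [hh] at ht ⊢
  have hP := periodic_of_recurrence hg hper ht
  have hg_neg_mul : ∀ k : ℤ, g (-(k * r)) = g (k * r) := fun k => by
    simpa using (hper.int_mul_eq (-k)).trans (hper.int_mul_eq k).symm
  refine ⟨yT_add_one_add_one ht, yT_sub_one_add_one ht, fun i => ?_, fun i => ?_,
    yT_add_one_sub_one ht, yT_sub_one_sub_one ht, fun i => ?_, fun i => ?_, fun j => ?_,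
    fun j => ?_, ?_, ?_, fun j => ?_, fun j => ?_, ?_, ?_⟩
  · simpa [yT_zero_left] using yT_sub_one_add_one ht 1 i
  · simpa only [yT_natCast_add_one_left hP] using yT_add_one_add_one ht r i
  · have h := yT_sub_one_sub_one ht 1 i
    rw [sub_self, yT_zero_left] at h
    convert h using 3 <;> ring
  · simpa only [yT_natCast_add_one_left hP] using yT_add_one_sub_one ht r i
  · have h := yT_add_one_sub_one ht j 1
    rw [sub_self, yT_zero_right hg ht] at h
    convert h using 3 <;> ring
  · have h := yT_sub_one_sub_one ht j 1
    rw [sub_self, yT_zero_right hg ht] at h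
    convert h using 3 <;> ring
  · rw [neg_zero]
  · congr 1
    simpa using (hg_neg_mul 1).symm
  · have h := yT_add_one_add_one ht j r
    rw [yT_natCast_add_one_right hg ht hP] at h
    convert h using 3 <;> ring
  · have h := yT_sub_one_add_one ht j r
    rw [yT_natCast_add_one_right hg ht hP] at h
    convert h using 3 <;> ring
  · congr 1
    simpa using (hg_neg_mul 1).symm
  · congr 1
    simpa using (hg_neg_mul 2).symm

theorem stmt15_general (τ : ℂ) (η l : ℂ) (tl : ℕ)
    (r : ℕ) (r' : ℤ) (hη : 2*(r:ℂ)*l*η = (r':ℂ))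
    (u v : ℂ)
    (hG : ∀ m : ℤ, theta2l η τ tl ((v-u)/2 + 2*(m:ℂ)*l*η) ≠ 0)
    (t : ℤ → ℂ)
    (ht : ∀ m : ℤ, t (m+2) * theta2l η τ tl ((v-u)/2 + 2*(m:ℂ)*l*η)
        = t m * theta2l η τ tl ((u-v)/2 + 2*(m:ℂ)*l*η)) :
    (∀ j i : ℤ, yT t (j+1) (i+1) * theta2l η τ tl ((v-u)/2 + 2*((i+j : ℤ):ℂ)*l*η)
      = yT t (j) (i) * theta2l η τ tl ((u-v)/2 + 2*((i+j : ℤ):ℂ)*l*η)) ∧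
    (∀ j i : ℤ, yT t (j-1) (i+1) * theta2l η τ tl ((v-u)/2 + 2*((i-j+1 : ℤ):ℂ)*l*η)
      = yT t (j) (i) * theta2l η τ tl ((u-v)/2 + 2*((i-j+1 : ℤ):ℂ)*l*η)) ∧
    (∀ i : ℤ, yT t ((1:ℤ)) (i+1) * theta2l η τ tl ((v-u)/2 + 2*((i : ℤ):ℂ)*l*η)
      = yT t ((1:ℤ)) (i) * theta2l η τ tl ((u-v)/2 + 2*((i : ℤ):ℂ)*l*η)) ∧
    (∀ i : ℤ, yT t ((r:ℤ)) (i+1) * theta2l η τ tl ((v-u)/2 + 2*((i+(r:ℤ) : ℤ):ℂ)*l*η)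
      = yT t ((r:ℤ)) (i) * theta2l η τ tl ((u-v)/2 + 2*((i+(r:ℤ) : ℤ):ℂ)*l*η)) ∧
    (∀ j i : ℤ, yT t (j+1) (i-1) * theta2l η τ tl ((v-u)/2 + 2*((-i+j+1 : ℤ):ℂ)*l*η)
      = yT t (j) (i) * theta2l η τ tl ((u-v)/2 + 2*((-i+j+1 : ℤ):ℂ)*l*η)) ∧
    (∀ j i : ℤ, yT t (j-1) (i-1) * theta2l η τ tl ((v-u)/2 + 2*((-i-j+2 : ℤ):ℂ)*l*η)
      = yT t (j) (i) * theta2l η τ tl ((u-v)/2 + 2*((-i-j+2 : ℤ):ℂ)*l*η)) ∧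
    (∀ i : ℤ, yT t ((1:ℤ)) (i-1) * theta2l η τ tl ((v-u)/2 + 2*((-i+1 : ℤ):ℂ)*l*η)
      = yT t ((1:ℤ)) (i) * theta2l η τ tl ((u-v)/2 + 2*((-i+1 : ℤ):ℂ)*l*η)) ∧
    (∀ i : ℤ, yT t ((r:ℤ)) (i-1) * theta2l η τ tl ((v-u)/2 + 2*((-i+(r:ℤ)+1 : ℤ):ℂ)*l*η)
      = yT t ((r:ℤ)) (i) * theta2l η τ tl ((u-v)/2 + 2*((-i+(r:ℤ)+1 : ℤ):ℂ)*l*η)) ∧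
    (∀ j : ℤ, yT t (j+1) ((1:ℤ)) * theta2l η τ tl ((v-u)/2 + 2*((j : ℤ):ℂ)*l*η)
      = yT t (j) ((1:ℤ)) * theta2l η τ tl ((u-v)/2 + 2*((j : ℤ):ℂ)*l*η)) ∧
    (∀ j : ℤ, yT t (j-1) ((1:ℤ)) * theta2l η τ tl ((v-u)/2 + 2*((-j+1 : ℤ):ℂ)*l*η)
      = yT t (j) ((1:ℤ)) * theta2l η τ tl ((u-v)/2 + 2*((-j+1 : ℤ):ℂ)*l*η)) ∧
    (yT t ((1:ℤ)) ((1:ℤ)) * theta2l η τ tl ((v-u)/2 + 2*(((0:ℤ) : ℤ):ℂ)*l*η)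
      = yT t ((1:ℤ)) ((1:ℤ)) * theta2l η τ tl ((u-v)/2 + 2*(((0:ℤ) : ℤ):ℂ)*l*η)) ∧
    (yT t ((r:ℤ)) ((1:ℤ)) * theta2l η τ tl ((v-u)/2 + 2*(((r:ℤ) : ℤ):ℂ)*l*η)
      = yT t ((r:ℤ)) ((1:ℤ)) * theta2l η τ tl ((u-v)/2 + 2*(((r:ℤ) : ℤ):ℂ)*l*η)) ∧
    (∀ j : ℤ, yT t (j+1) ((r:ℤ)) * theta2l η τ tl ((v-u)/2 + 2*((j+(r:ℤ) : ℤ):ℂ)*l*η)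
      = yT t (j) ((r:ℤ)) * theta2l η τ tl ((u-v)/2 + 2*((j+(r:ℤ) : ℤ):ℂ)*l*η)) ∧
    (∀ j : ℤ, yT t (j-1) ((r:ℤ)) * theta2l η τ tl ((v-u)/2 + 2*((-j+(r:ℤ)+1 : ℤ):ℂ)*l*η)
      = yT t (j) ((r:ℤ)) * theta2l η τ tl ((u-v)/2 + 2*((-j+(r:ℤ)+1 : ℤ):ℂ)*l*η)) ∧
    (yT t ((1:ℤ)) ((r:ℤ)) * theta2l η τ tl ((v-u)/2 + 2*(((r:ℤ) : ℤ):ℂ)*l*η)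
      = yT t ((1:ℤ)) ((r:ℤ)) * theta2l η τ tl ((u-v)/2 + 2*(((r:ℤ) : ℤ):ℂ)*l*η)) ∧
    (yT t ((r:ℤ)) ((r:ℤ)) * theta2l η τ tl ((v-u)/2 + 2*((2*(r:ℤ) : ℤ):ℂ)*l*η)
      = yT t ((r:ℤ)) ((r:ℤ)) * theta2l η τ tl ((u-v)/2 + 2*((2*(r:ℤ) : ℤ):ℂ)*l*η)) := by
  have hG_even : ∀ m : ℤ, theta2l η τ tl ((u-v)/2 + 2*(m:ℂ)*l*η)
      = theta2l η τ tl ((v-u)/2 + 2*((-m : ℤ):ℂ)*l*η) := fun m => by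
    rw [← theta2l_neg]
    congr 1
    push_cast
    ring
  have hG_periodic : Periodic (fun m : ℤ => theta2l η τ tl ((v-u)/2 + 2*(m:ℂ)*l*η)) r :=
    fun m => by
      dsimp only
      conv_rhs => rw [← theta2l_add_intCast η τ tl _ r']
      congr 1
      push_cast
      linear_combination hη
  exact yT_transitions hG hG_even hG_periodic ht

/-- The 16 cases of `y_{j''',i'''}/y_{j'',i''} = G((u-v)/2+2wlη)/G((v-u)/2+2wlη)`. -/
theorem stmt15 (τ : ℂ) (hτ : 0 < τ.im) (η l : ℂ) (tl : ℕ) (htl : 0 < tl)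
    (hl : (tl:ℂ) = 2*l)
    (r : ℕ) (r' : ℤ) (hr : 0 < r) (hη : 2*(r:ℂ)*l*η = (r':ℂ))
    (u v : ℂ)
    (hG : ∀ m : ℤ, theta2l η τ tl ((v-u)/2 + 2*(m:ℂ)*l*η) ≠ 0)
    (t : ℤ → ℂ)
    (ht : ∀ m : ℤ, t (m+2) * theta2l η τ tl ((v-u)/2 + 2*(m:ℂ)*l*η)
        = t m * theta2l η τ tl ((u-v)/2 + 2*(m:ℂ)*l*η)) :
    (∀ j i : ℤ, yT t (j+1) (i+1) * theta2l η τ tl ((v-u)/2 + 2*((i+j : ℤ):ℂ)*l*η)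
      = yT t (j) (i) * theta2l η τ tl ((u-v)/2 + 2*((i+j : ℤ):ℂ)*l*η)) ∧
    (∀ j i : ℤ, yT t (j-1) (i+1) * theta2l η τ tl ((v-u)/2 + 2*((i-j+1 : ℤ):ℂ)*l*η)
      = yT t (j) (i) * theta2l η τ tl ((u-v)/2 + 2*((i-j+1 : ℤ):ℂ)*l*η)) ∧
    (∀ i : ℤ, yT t ((1:ℤ)) (i+1) * theta2l η τ tl ((v-u)/2 + 2*((i : ℤ):ℂ)*l*η)
      = yT t ((1:ℤ)) (i) * theta2l η τ tl ((u-v)/2 + 2*((i : ℤ):ℂ)*l*η)) ∧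
    (∀ i : ℤ, yT t ((r:ℤ)) (i+1) * theta2l η τ tl ((v-u)/2 + 2*((i+(r:ℤ) : ℤ):ℂ)*l*η)
      = yT t ((r:ℤ)) (i) * theta2l η τ tl ((u-v)/2 + 2*((i+(r:ℤ) : ℤ):ℂ)*l*η)) ∧
    (∀ j i : ℤ, yT t (j+1) (i-1) * theta2l η τ tl ((v-u)/2 + 2*((-i+j+1 : ℤ):ℂ)*l*η)
      = yT t (j) (i) * theta2l η τ tl ((u-v)/2 + 2*((-i+j+1 : ℤ):ℂ)*l*η)) ∧
    (∀ j i : ℤ, yT t (j-1) (i-1) * theta2l η τ tl ((v-u)/2 + 2*((-i-j+2 : ℤ):ℂ)*l*η)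
      = yT t (j) (i) * theta2l η τ tl ((u-v)/2 + 2*((-i-j+2 : ℤ):ℂ)*l*η)) ∧
    (∀ i : ℤ, yT t ((1:ℤ)) (i-1) * theta2l η τ tl ((v-u)/2 + 2*((-i+1 : ℤ):ℂ)*l*η)
      = yT t ((1:ℤ)) (i) * theta2l η τ tl ((u-v)/2 + 2*((-i+1 : ℤ):ℂ)*l*η)) ∧
    (∀ i : ℤ, yT t ((r:ℤ)) (i-1) * theta2l η τ tl ((v-u)/2 + 2*((-i+(r:ℤ)+1 : ℤ):ℂ)*l*η)
      = yT t ((r:ℤ)) (i) * theta2l η τ tl ((u-v)/2 + 2*((-i+(r:ℤ)+1 : ℤ):ℂ)*l*η)) ∧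
    (∀ j : ℤ, yT t (j+1) ((1:ℤ)) * theta2l η τ tl ((v-u)/2 + 2*((j : ℤ):ℂ)*l*η)
      = yT t (j) ((1:ℤ)) * theta2l η τ tl ((u-v)/2 + 2*((j : ℤ):ℂ)*l*η)) ∧
    (∀ j : ℤ, yT t (j-1) ((1:ℤ)) * theta2l η τ tl ((v-u)/2 + 2*((-j+1 : ℤ):ℂ)*l*η)
      = yT t (j) ((1:ℤ)) * theta2l η τ tl ((u-v)/2 + 2*((-j+1 : ℤ):ℂ)*l*η)) ∧
    (yT t ((1:ℤ)) ((1:ℤ)) * theta2l η τ tl ((v-u)/2 + 2*(((0:ℤ) : ℤ):ℂ)*l*η)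
      = yT t ((1:ℤ)) ((1:ℤ)) * theta2l η τ tl ((u-v)/2 + 2*(((0:ℤ) : ℤ):ℂ)*l*η)) ∧
    (yT t ((r:ℤ)) ((1:ℤ)) * theta2l η τ tl ((v-u)/2 + 2*(((r:ℤ) : ℤ):ℂ)*l*η)
      = yT t ((r:ℤ)) ((1:ℤ)) * theta2l η τ tl ((u-v)/2 + 2*(((r:ℤ) : ℤ):ℂ)*l*η)) ∧
    (∀ j : ℤ, yT t (j+1) ((r:ℤ)) * theta2l η τ tl ((v-u)/2 + 2*((j+(r:ℤ) : ℤ):ℂ)*l*η)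
      = yT t (j) ((r:ℤ)) * theta2l η τ tl ((u-v)/2 + 2*((j+(r:ℤ) : ℤ):ℂ)*l*η)) ∧
    (∀ j : ℤ, yT t (j-1) ((r:ℤ)) * theta2l η τ tl ((v-u)/2 + 2*((-j+(r:ℤ)+1 : ℤ):ℂ)*l*η)
      = yT t (j) ((r:ℤ)) * theta2l η τ tl ((u-v)/2 + 2*((-j+(r:ℤ)+1 : ℤ):ℂ)*l*η)) ∧
    (yT t ((1:ℤ)) ((r:ℤ)) * theta2l η τ tl ((v-u)/2 + 2*(((r:ℤ) : ℤ):ℂ)*l*η)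
      = yT t ((1:ℤ)) ((r:ℤ)) * theta2l η τ tl ((u-v)/2 + 2*(((r:ℤ) : ℤ):ℂ)*l*η)) ∧
    (yT t ((r:ℤ)) ((r:ℤ)) * theta2l η τ tl ((v-u)/2 + 2*((2*(r:ℤ) : ℤ):ℂ)*l*η)
      = yT t ((r:ℤ)) ((r:ℤ)) * theta2l η τ tl ((u-v)/2 + 2*((2*(r:ℤ) : ℤ):ℂ)*l*η)) :=
  stmt15_general τ η l tl r r' hη u v hG t ht
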